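/- arXiv:2508.12340 — 3 statements merged into one kernel-verified Lean document; each statement's English description precedes it below -/
import Mathlib

section
/- Let p and q be primes with p ≥ 7 and q ≥ 7 such that p-2 and q-2 are also prime. If the elliptic curves E_p: y^2 = x(x-2)(x-p) and E_q: y^2 = x(x-2)(x-q) have equal j-invariants, then p = q. -/
/-- If `p, q ≥ 7` are primes with `p-2` and `q-2` prime, and the twin prime curves
`E_p` and `E_q` have equal `j`-invariants, then `p = q`. -/
theorem twin_prime_curves_j_invariant_eq (p q : ℕ) (hp : p.Prime) (hq : q.Prime)
    (hp7 : 7 ≤ p) (hq7 : 7 ≤ q) (hp2 : Nat.Prime (p - 2)) (hq2 : Nat.Prime (q - 2))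
    (hj : (16 * (((p : ℚ) + 2) ^ 2 - 6 * p)) ^ 3 / (-64 * (p : ℚ) ^ 2 * ((p : ℚ) - 2) ^ 2) =
      (16 * (((q : ℚ) + 2) ^ 2 - 6 * q)) ^ 3 / (-64 * (q : ℚ) ^ 2 * ((q : ℚ) - 2) ^ 2)) :
    p = q := by
  have hP : (7:ℚ) ≤ (p:ℚ) := by exact_mod_cast hp7
  have hQ : (7:ℚ) ≤ (q:ℚ) := by exact_mod_cast hq7
  have hd1 : (-64 * (p : ℚ) ^ 2 * ((p : ℚ) - 2) ^ 2) ≠ 0 := by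
    have : (-64 * (p : ℚ) ^ 2 * ((p : ℚ) - 2) ^ 2) < 0 := by nlinarith
    exact ne_of_lt this
  have hd2 : (-64 * (q : ℚ) ^ 2 * ((q : ℚ) - 2) ^ 2) ≠ 0 := by
    have : (-64 * (q : ℚ) ^ 2 * ((q : ℚ) - 2) ^ 2) < 0 := by nlinarith
    exact ne_of_lt this
  have key := (div_eq_div_iff hd1 hd2).mp hj
  set P : ℚ := (p:ℚ)
  set Q : ℚ := (q:ℚ)
  have ha : P^2 - 2*P ≥ 35 := by nlinarith
  have hb : Q^2 - 2*Q ≥ 35 := by nlinarith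
  have h1 : (P - Q) * (P + Q - 2) *
      ((P^2 - 2*P)^2 * (Q^2 - 2*Q)^2 - 48*(P^2 - 2*P)*(Q^2 - 2*Q)
        - 64*(P^2 - 2*P) - 64*(Q^2 - 2*Q)) = 0 := by
    linear_combination (-1/262144 : ℚ) * key
  have hF : ((P^2 - 2*P)^2 * (Q^2 - 2*Q)^2 - 48*(P^2 - 2*P)*(Q^2 - 2*Q)
        - 64*(P^2 - 2*P) - 64*(Q^2 - 2*Q)) > 0 := by
    nlinarith [mul_le_mul ha hb (by norm_num) (by linarith), sq_nonneg ((P^2-2*P)*(Q^2-2*Q))]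
  have h2 : P + Q - 2 > 0 := by linarith
  have h3 : P - Q = 0 := by
    rcases mul_eq_zero.mp h1 with h | h
    · rcases mul_eq_zero.mp h with h' | h'
      · exact h'
      · linarith
    · linarith
  have : P = Q := by linarith
  exact_mod_cast show (p:ℚ) = (q:ℚ) from this
end

section
/- Let p ≥ 7 be a prime with p-2 prime. Then the j-invariant j(E_p) = (16((p+2)^2-6p))^3 / (-64 p^2 (p-2)^2) has negative p-adic valuation and negative (p-2)-adic valuation, but nonnegative 2-adic valuation. -/
/-!
Write `q = p - 2`. Since `(p + 2)² - 6p = pq + 4`, the `j`-invariant is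
`-2⁶ (pq + 4)³ / (pq)²`. A prime `ℓ ∣ pq` with `ℓ ≠ 2` cannot divide `pq + 4`, so the numerator
is a unit at `p` and at `q` while the denominator has valuation `2` there. At `2` the
denominator is a unit.
-/

lemma j_invariant_eq_of_add_two_eq {p q : ℕ} (hpq : q + 2 = p) :
    (16 * (((p : ℚ) + 2) ^ 2 - 6 * p)) ^ 3 / (-64 * (p : ℚ) ^ 2 * ((p : ℚ) - 2) ^ 2) =
      -(2 ^ 6 * ((p * q + 4 : ℕ) : ℚ) ^ 3) / ((p * q : ℕ) : ℚ) ^ 2 := by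
  have hp : (p : ℚ) = q + 2 := by rw [← hpq]; push_cast; ring
  rw [show ((p : ℚ) + 2) ^ 2 - 6 * p = p * q + 4 by rw [hp]; ring,
    show (p : ℚ) - 2 = q by rw [hp]; ring]
  push_cast
  ring

lemma padicValRat_neg_two_pow_six_mul_pow_three_div_sq (ℓ : ℕ) [Fact ℓ.Prime] {a b : ℕ}
    (ha : a ≠ 0) (hb : b ≠ 0) :
    padicValRat ℓ (-(2 ^ 6 * (a : ℚ) ^ 3) / (b : ℚ) ^ 2) =
      6 * padicValNat ℓ 2 + 3 * padicValNat ℓ a - 2 * padicValNat ℓ b := by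
  have h2 : padicValRat ℓ 2 = padicValNat ℓ 2 := padicValRat.of_nat
  rw [padicValRat.div (neg_ne_zero.mpr (by positivity)) (by positivity), padicValRat.neg,
    padicValRat.mul (by norm_num) (by positivity), padicValRat.pow, padicValRat.pow,
    padicValRat.pow, h2, padicValRat.of_nat, padicValRat.of_nat]
  push_cast
  ring

lemma padicValNat_add_four_eq_zero {ℓ n : ℕ} [hℓ : Fact ℓ.Prime] (hℓ2 : ℓ ≠ 2) (hdvd : ℓ ∣ n) :
    padicValNat ℓ (n + 4) = 0 := by
  refine padicValNat.eq_zero_of_not_dvd fun h => hℓ2 ?_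
  have h4 : ℓ ∣ 2 ^ 2 := (Nat.dvd_add_right hdvd).mp h
  exact (Nat.prime_dvd_prime_iff_eq hℓ.out Nat.prime_two).mp (hℓ.out.dvd_of_dvd_pow h4)

theorem j_invariant_valuations_general (p : ℕ) (hp : p.Prime)
    (hp2 : Nat.Prime (p - 2)) :
    padicValRat p ((16 * (((p : ℚ) + 2) ^ 2 - 6 * p)) ^ 3 /
        (-64 * (p : ℚ) ^ 2 * ((p : ℚ) - 2) ^ 2)) < 0 ∧
    padicValRat (p - 2) ((16 * (((p : ℚ) + 2) ^ 2 - 6 * p)) ^ 3 /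
        (-64 * (p : ℚ) ^ 2 * ((p : ℚ) - 2) ^ 2)) < 0 ∧
    0 ≤ padicValRat 2 ((16 * (((p : ℚ) + 2) ^ 2 - 6 * p)) ^ 3 /
        (-64 * (p : ℚ) ^ 2 * ((p : ℚ) - 2) ^ 2)) := by
  have : Fact p.Prime := ⟨hp⟩
  have : Fact (p - 2).Prime := ⟨hp2⟩
  have hp4 : 4 ≤ p := by have := hp2.two_le; omega
  have hp_ne_two : p ≠ 2 := by omega
  have hq_ne_two : p - 2 ≠ 2 := fun h => by
    obtain rfl : p = 4 := by omega
    exact absurd hp (by decide)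
  have hp_ne_q : p ≠ p - 2 := by omega
  have hv (ℓ : ℕ) [Fact ℓ.Prime] := padicValRat_neg_two_pow_six_mul_pow_three_div_sq ℓ
    (a := p * (p - 2) + 4) (b := p * (p - 2)) (by omega) (mul_ne_zero (by omega) (by omega))
  rw [j_invariant_eq_of_add_two_eq (q := p - 2) (by omega)]
  refine ⟨?_, ?_, ?_⟩
  · rw [hv, padicValNat_primes hp_ne_two,
      padicValNat_add_four_eq_zero hp_ne_two (dvd_mul_right _ _),
      padicValNat.mul (by omega) (by omega), padicValNat.self hp.one_lt, padicValNat_primes hp_ne_q]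
    norm_num
  · rw [hv, padicValNat_primes hq_ne_two,
      padicValNat_add_four_eq_zero hq_ne_two (dvd_mul_left _ _),
      padicValNat.mul (by omega) (by omega), padicValNat.self hp2.one_lt,
      padicValNat_primes hp_ne_q.symm]
    norm_num
  · rw [hv, padicValNat.self one_lt_two, padicValNat.mul (by omega) (by omega),
      padicValNat_primes hp_ne_two.symm, padicValNat_primes hq_ne_two.symm]
    omega

/-- For a twin prime pair `(p, p-2)` with `p ≥ 7`, the `j`-invariant
`j(E_p) = (16((p+2)²-6p))³ / (-64 p² (p-2)²)` has negative `p`-adic and `(p-2)`-adic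
valuation, but nonnegative `2`-adic valuation. -/
theorem j_invariant_valuations (p : ℕ) (hp : p.Prime) (hp7 : 7 ≤ p)
    (hp2 : Nat.Prime (p - 2)) :
    padicValRat p ((16 * (((p : ℚ) + 2) ^ 2 - 6 * p)) ^ 3 /
        (-64 * (p : ℚ) ^ 2 * ((p : ℚ) - 2) ^ 2)) < 0 ∧
    padicValRat (p - 2) ((16 * (((p : ℚ) + 2) ^ 2 - 6 * p)) ^ 3 /
        (-64 * (p : ℚ) ^ 2 * ((p : ℚ) - 2) ^ 2)) < 0 ∧
    0 ≤ padicValRat 2 ((16 * (((p : ℚ) + 2) ^ 2 - 6 * p)) ^ 3 /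
        (-64 * (p : ℚ) ^ 2 * ((p : ℚ) - 2) ^ 2)) :=
  j_invariant_valuations_general p hp hp2
end

section
/- Let p be an odd number and T(p) = ((p+2)^2 - 6p) - 2(p+2)((p+2)^2 - 9p). Then T(p) ≡ 11 mod 16 if and only if p ≡ ±3 mod 8, equivalently if and only if 2 is a quadratic non-residue modulo p when p is prime. -/
/-- For odd `p`, `T(p) = ((p+2)² - 6p) - 2(p+2)((p+2)² - 9p)` satisfies
`T(p) ≡ 11 mod 16` if and only if `p ≡ ±3 mod 8`; equivalently, when `p` is prime,
if and only if `2` is a quadratic non-residue modulo `p`. -/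
theorem T_cong_eleven_iff (p : ℕ) (hodd : Odd p) :
    ((((p : ℤ) + 2) ^ 2 - 6 * p) - 2 * ((p : ℤ) + 2) * (((p : ℤ) + 2) ^ 2 - 9 * p)
        ≡ 11 [ZMOD 16] ↔ (p % 8 = 3 ∨ p % 8 = 5)) ∧
    (∀ hp : p.Prime,
      ((((p : ℤ) + 2) ^ 2 - 6 * p) - 2 * ((p : ℤ) + 2) * (((p : ℤ) + 2) ^ 2 - 9 * p)
        ≡ 11 [ZMOD 16] ↔ @legendreSym p ⟨hp⟩ 2 = -1)) := by
  have h2 : p % 2 = 1 := Nat.odd_iff.mp hodd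
  have key : ((((p : ℤ) + 2) ^ 2 - 6 * p) - 2 * ((p : ℤ) + 2) * (((p : ℤ) + 2) ^ 2 - 9 * p)
        ≡ 11 [ZMOD 16] ↔ (p % 8 = 3 ∨ p % 8 = 5)) := by
    rw [show ((16:ℤ)) = ((16:ℕ):ℤ) by norm_num, ← ZMod.intCast_eq_intCast_iff]
    push_cast
    rw [show ((p : ZMod 16)) = ((p % 16 : ℕ) : ZMod 16) from (ZMod.natCast_mod p 16).symm,
      show p % 8 = (p % 16) % 8 from (Nat.mod_mod_of_dvd p (by norm_num)).symm]
    have h16 : p % 16 % 2 = 1 := by omega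
    have hlt : p % 16 < 16 := Nat.mod_lt _ (by norm_num)
    interval_cases h : p % 16 <;> simp_all <;> decide
  refine ⟨key, fun hp => ?_⟩
  haveI : Fact p.Prime := ⟨hp⟩
  have hp2 : p ≠ 2 := by rintro rfl; simp at h2
  rw [key, legendreSym.eq_neg_one_iff]
  rw [show (((2:ℤ) : ZMod p)) = (2 : ZMod p) by push_cast; ring, ZMod.exists_sq_eq_two_iff hp2]
  have := hp.two_le
  omega
end
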